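/- For every integer N ≥ 1, define h : (0,1) → ℝ by h(p) = ∑_{k1=0}^{N} ∑_{k2=1}^{N-k1} 2^{k2} · (k2/(2k1 + k2)) · (N!/(k1! k2! (N-k1-k2)!)) · ((1-p)/p)^{2k1 + k2}. Then for every p ∈ (0,1), h is differentiable at p with derivative h'(p) = -2N/p^{2N}. -/

import Mathlib

/-!
With `x = (1 - p) / p`, `h N p` is a polynomial in `x`. Differentiating `x ^ (2 k₁ + k₂)` produces
the factor `2 k₁ + k₂`, which cancels the denominator of the estimator and leaves
`∑ k₂ 2 ^ k₂ (N choose k₁, k₂) x ^ (2 k₁ + k₂ - 1)`. Absorbing `k₂` into the trinomial coefficient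
turns this into `2 N` times the trinomial expansion of `(x² + 2x + 1) ^ (N - 1) = (1 + x) ^ (2N - 2)`.
Since `1 + x = 1 / p`, the chain rule factor `-1 / p²` gives `-2N / p ^ (2N)`.
-/

open Finset

/-- The function `h` from the proof of the expected-value formula. -/
noncomputable def h (N : ℕ) (p : ℝ) : ℝ :=
  ∑ k1 ∈ Finset.range (N + 1), ∑ k2 ∈ Finset.Icc 1 (N - k1),
    (2 : ℝ) ^ k2 * ((k2 : ℝ) / (2 * k1 + k2)) *
      ((N.factorial : ℝ) / (k1.factorial * k2.factorial * (N - k1 - k2).factorial)) *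
      ((1 - p) / p) ^ (2 * k1 + k2)

open Nat

noncomputable def trinomialCoeff (n k j : ℕ) : ℝ :=
  (n ! : ℝ) / (k ! * j ! * (n - k - j)!)

theorem trinomialCoeff_eq_choose_mul_choose {n k j : ℕ} (hk : k ≤ n) (hj : j ≤ n - k) :
    trinomialCoeff n k j = n.choose k * (n - k).choose j := by
  have hn : n ! = n.choose k * (n - k).choose j * (k ! * j ! * (n - k - j)!) := by
    rw [← choose_mul_factorial_mul_factorial hk, ← choose_mul_factorial_mul_factorial hj]
    ring
  rw [trinomialCoeff, hn]
  push_cast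
  field_simp

theorem succ_mul_trinomialCoeff_succ (n k j : ℕ) :
    (j + 1 : ℝ) * trinomialCoeff (n + 1) k (j + 1) = (n + 1) * trinomialCoeff n k j := by
  have hsub : n + 1 - k - (j + 1) = n - k - j := by omega
  rw [trinomialCoeff, trinomialCoeff, hsub, factorial_succ, factorial_succ]
  push_cast
  field_simp

theorem sum_trinomialCoeff_mul_pow (n : ℕ) (x : ℝ) :
    ∑ k ∈ range (n + 1), ∑ j ∈ range (n - k + 1), 2 ^ j * trinomialCoeff n k j * x ^ (2 * k + j)
      = (1 + x) ^ (2 * n) := by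
  rw [pow_mul, show (1 + x) ^ 2 = x ^ 2 + (2 * x + 1) by ring, add_pow]
  refine sum_congr rfl fun k hk => ?_
  rw [add_pow, mul_sum, sum_mul]
  refine sum_congr rfl fun j hj => ?_
  rw [trinomialCoeff_eq_choose_mul_choose (by simpa [Nat.lt_succ_iff] using hk)
    (by simpa [Nat.lt_succ_iff] using hj), pow_add, pow_mul, mul_pow]
  ring

theorem sum_mul_trinomialCoeff_mul_pow_pred (n : ℕ) (x : ℝ) :
    ∑ k ∈ range (n + 2), ∑ j ∈ Icc 1 (n + 1 - k),
        2 ^ j * j * trinomialCoeff (n + 1) k j * x ^ (2 * k + j - 1)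
      = 2 * (n + 1) * (1 + x) ^ (2 * n) := by
  rw [sum_range_succ, Nat.sub_self, Icc_eq_empty (by omega), sum_empty, add_zero,
    ← sum_trinomialCoeff_mul_pow, mul_sum]
  refine sum_congr rfl fun k hk => ?_
  have hk : n + 1 - k = n - k + 1 := by simp at hk; omega
  rw [hk, ← Ico_add_one_right_eq_Icc, sum_Ico_eq_sum_range, Nat.add_sub_cancel, mul_sum]
  refine sum_congr rfl fun j _ => ?_
  have hexp : 2 * k + (1 + j) - 1 = 2 * k + j := by omega
  rw [hexp, add_comm 1 j, pow_succ]
  push_cast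
  linear_combination (2 * 2 ^ j * x ^ (2 * k + j)) * succ_mul_trinomialCoeff_succ n k j

noncomputable def hPoly (N : ℕ) (x : ℝ) : ℝ :=
  ∑ k ∈ range (N + 1), ∑ j ∈ Icc 1 (N - k),
    2 ^ j * ((j : ℝ) / (2 * k + j)) * trinomialCoeff N k j * x ^ (2 * k + j)

theorem h_eq_hPoly_comp (N : ℕ) : h N = hPoly N ∘ fun p => (1 - p) / p := rfl

theorem hasDerivAt_hPoly_succ (n : ℕ) (x : ℝ) :
    HasDerivAt (hPoly (n + 1)) (2 * (n + 1) * (1 + x) ^ (2 * n)) x := by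
  rw [← sum_mul_trinomialCoeff_mul_pow_pred]
  refine HasDerivAt.fun_sum fun k _ => HasDerivAt.fun_sum fun j hj => ?_
  have hm : ((2 * k + j : ℕ) : ℝ) ≠ 0 := Nat.cast_ne_zero.mpr (by simp at hj; omega)
  push_cast at hm
  refine ((hasDerivAt_pow (2 * k + j) x).const_mul _).congr_deriv ?_
  push_cast
  field_simp

theorem hasDerivAt_one_sub_div_self {p : ℝ} (hp : p ≠ 0) :
    HasDerivAt (fun q => (1 - q) / q) (-1 / p ^ 2) p := by
  refine (((hasDerivAt_id p).const_sub 1).fun_div (hasDerivAt_id p) hp).congr_deriv ?_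
  simp only [id]
  ring

theorem derivative_of_h (N : ℕ) (hN : 1 ≤ N) (p : ℝ) (hp : p ∈ Set.Ioo (0 : ℝ) 1) :
    HasDerivAt (h N) (-(2 * (N : ℝ)) / p ^ (2 * N)) p := by
  obtain ⟨n, rfl⟩ := exists_add_one_eq.mpr hN
  have hp0 : p ≠ 0 := hp.1.ne'
  rw [h_eq_hPoly_comp]
  refine ((hasDerivAt_hPoly_succ n _).comp p (hasDerivAt_one_sub_div_self hp0)).congr_deriv ?_
  rw [show 1 + (1 - p) / p = p⁻¹ by field_simp; ring]
  push_cast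
  simp only [inv_pow]
  field_simp
  ring
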